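/- arXiv:1103.4299 — 4 statements merged into one kernel-verified Lean document; each statement's English description precedes it below -/
import Mathlib

section
/- Let π₁, π₂ be orthogonal representations of a group Γ on real Hilbert spaces H₁, H₂, and let q₁, q₂ be arrays for π₁, π₂ respectively (i.e., for each γ there is a bound r'(γ) with ‖qᵢ(γλ) − (πᵢ)_γ(qᵢ(λ))‖ ≤ r'(γ) for all λ). With κ(γ) = max(‖q₁(γ)‖, ‖q₂(γ)‖) + 1, the map q(γ) = κ(γ)⁻¹ · q₁(γ) ⊗ q₂(γ) into H₁ ⊗ H₂ satisfies: for every γ there is a constant C(γ) such that ‖q(γλ) − (π₁ ⊗ π₂)_γ(q(λ))‖ ≤ C(γ) for all λ ∈ Γ; explicitly one may take C(γ) = 2 r'(γ) + max(r'(γ), r'(γ⁻¹)). -/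
open RealInnerProductSpace

/-!
Write `κ(x, y) = max ‖x‖ ‖y‖ + 1`, so that `‖x‖ ≤ κ(x, y)` and `‖y‖ ≤ κ(x, y)`. If `a` is within `r`
of `a'` and `b` within `r` of `b'`, then `κ(a, b)⁻¹ (a ⊗ b) - κ(a', b')⁻¹ (a' ⊗ b')` splits as
`κ(a, b)⁻¹ (a - a') ⊗ b + κ(a', b')⁻¹ a' ⊗ (b - b') + (κ(a, b)⁻¹ - κ(a', b')⁻¹) a' ⊗ b`;
each term has norm at most `r`, the last because `|κ(a, b) - κ(a', b')| ≤ r`. Since `π₁ γ` and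
`π₂ γ` are isometries, this applies to `a = q₁ (γ λ)`, `a' = π₁ γ (q₁ λ)` and the same for `q₂`.
-/

section NormalizedTensor

variable {E F G : Type*} [NormedAddCommGroup E] [NormedAddCommGroup F] [NormedAddCommGroup G]

lemma norm_apply_apply_eq_mul_of_inner
    [InnerProductSpace ℝ E] [InnerProductSpace ℝ F] [InnerProductSpace ℝ G]
    {tens : E →ₗ[ℝ] F →ₗ[ℝ] G}
    (hinner : ∀ (a c : E) (b d : F), ⟪tens a b, tens c d⟫ = ⟪a, c⟫ * ⟪b, d⟫) (x : E) (y : F) :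
    ‖tens x y‖ = ‖x‖ * ‖y‖ := by
  have h := hinner x x y y
  simp only [real_inner_self_eq_norm_mul_norm] at h
  nlinarith [norm_nonneg (tens x y), mul_nonneg (norm_nonneg x) (norm_nonneg y)]

lemma abs_max_norm_sub_max_norm_le {a a' : E} {b b' : F} {r : ℝ}
    (ha : ‖a - a'‖ ≤ r) (hb : ‖b - b'‖ ≤ r) :
    |max ‖a‖ ‖b‖ - max ‖a'‖ ‖b'‖| ≤ r :=
  (abs_max_sub_max_le_max _ _ _ _).trans <|
    max_le ((abs_norm_sub_norm_le a a').trans ha) ((abs_norm_sub_norm_le b b').trans hb)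

variable [NormedSpace ℝ E] [NormedSpace ℝ F] [NormedSpace ℝ G]

lemma norm_inv_smul_apply_apply_le {tens : E →ₗ[ℝ] F →ₗ[ℝ] G}
    (htens : ∀ x y, ‖tens x y‖ ≤ ‖x‖ * ‖y‖) {κ : ℝ} (hκ : 0 < κ) (x : E) (y : F) {r : ℝ}
    (h : ‖x‖ * ‖y‖ ≤ r * κ) : ‖κ⁻¹ • tens x y‖ ≤ r := by
  rw [norm_smul, norm_inv, Real.norm_of_nonneg hκ.le, inv_mul_le_iff₀ hκ, mul_comm κ]
  exact (htens x y).trans h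

theorem norm_normalized_tensor_sub_le {tens : E →ₗ[ℝ] F →ₗ[ℝ] G}
    (htens : ∀ x y, ‖tens x y‖ ≤ ‖x‖ * ‖y‖) {a a' : E} {b b' : F} {r : ℝ}
    (ha : ‖a - a'‖ ≤ r) (hb : ‖b - b'‖ ≤ r) :
    ‖(max ‖a‖ ‖b‖ + 1)⁻¹ • tens a b - (max ‖a'‖ ‖b'‖ + 1)⁻¹ • tens a' b'‖ ≤ 3 * r := by
  set κ := max ‖a‖ ‖b‖ + 1
  set κ' := max ‖a'‖ ‖b'‖ + 1
  have hκ : 0 < κ := by positivity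
  have hκ' : 0 < κ' := by positivity
  have hr : 0 ≤ r := (norm_nonneg _).trans ha
  have hbκ : ‖b‖ ≤ κ := by linarith [le_max_right ‖a‖ ‖b‖]
  have ha'κ' : ‖a'‖ ≤ κ' := by linarith [le_max_left ‖a'‖ ‖b'‖]
  have hκκ' : |κ' - κ| ≤ r := by
    rw [abs_sub_comm, show κ - κ' = max ‖a‖ ‖b‖ - max ‖a'‖ ‖b'‖ by ring]
    exact abs_max_norm_sub_max_norm_le ha hb
  have hsplit : κ⁻¹ • tens a b - κ'⁻¹ • tens a' b' =
      κ⁻¹ • tens (a - a') b + κ'⁻¹ • tens a' (b - b') + (κ * κ')⁻¹ • tens a' ((κ' - κ) • b) := by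
    have hcoeff : (κ * κ')⁻¹ * (κ' - κ) = κ⁻¹ - κ'⁻¹ := by field_simp
    simp only [map_sub, map_smul, LinearMap.sub_apply, smul_smul, hcoeff]
    module
  have h₁ : ‖κ⁻¹ • tens (a - a') b‖ ≤ r :=
    norm_inv_smul_apply_apply_le htens hκ _ _ (mul_le_mul ha hbκ (norm_nonneg _) hr)
  have h₂ : ‖κ'⁻¹ • tens a' (b - b')‖ ≤ r :=
    norm_inv_smul_apply_apply_le htens hκ' _ _ <| by
      rw [mul_comm r]; exact mul_le_mul ha'κ' hb (norm_nonneg _) hκ'.le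
  have h₃ : ‖(κ * κ')⁻¹ • tens a' ((κ' - κ) • b)‖ ≤ r :=
    norm_inv_smul_apply_apply_le htens (mul_pos hκ hκ') _ _ <| by
      rw [norm_smul, Real.norm_eq_abs]
      calc ‖a'‖ * (|κ' - κ| * ‖b‖) = |κ' - κ| * (‖a'‖ * ‖b‖) := by ring
        _ ≤ r * (κ' * κ) := by gcongr
        _ = r * (κ * κ') := by ring
  rw [hsplit]
  linarith [norm_add₃_le (a := κ⁻¹ • tens (a - a') b) (b := κ'⁻¹ • tens a' (b - b'))
    (c := (κ * κ')⁻¹ • tens a' ((κ' - κ) • b))]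

end NormalizedTensor

theorem tensor_of_arrays_boundedly_equivariant_general
    {Γ : Type*} [Group Γ]
    {H₁ : Type*} [NormedAddCommGroup H₁] [InnerProductSpace ℝ H₁]
    {H₂ : Type*} [NormedAddCommGroup H₂] [InnerProductSpace ℝ H₂]
    {H₃ : Type*} [NormedAddCommGroup H₃] [InnerProductSpace ℝ H₃]
    (π₁ : Γ →* (H₁ ≃ₗᵢ[ℝ] H₁)) (π₂ : Γ →* (H₂ ≃ₗᵢ[ℝ] H₂)) (ρ : Γ →* (H₃ ≃ₗᵢ[ℝ] H₃))
    (tens : H₁ →ₗ[ℝ] H₂ →ₗ[ℝ] H₃)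
    (hinner : ∀ (a c : H₁) (b d : H₂), (inner ℝ (tens a b) (tens c d) : ℝ) = (inner ℝ a c : ℝ) * (inner ℝ b d : ℝ))
    (hρ : ∀ (γ : Γ) (x : H₁) (y : H₂), ρ γ (tens x y) = tens (π₁ γ x) (π₂ γ y))
    (q₁ : Γ → H₁) (q₂ : Γ → H₂) (r' : Γ → ℝ)
    (h1 : ∀ γ lam : Γ, ‖q₁ (γ * lam) - π₁ γ (q₁ lam)‖ ≤ r' γ)
    (h2 : ∀ γ lam : Γ, ‖q₂ (γ * lam) - π₂ γ (q₂ lam)‖ ≤ r' γ) :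
    ∀ γ lam : Γ,
      ‖(max ‖q₁ (γ * lam)‖ ‖q₂ (γ * lam)‖ + 1)⁻¹ • tens (q₁ (γ * lam)) (q₂ (γ * lam))
          - ρ γ ((max ‖q₁ lam‖ ‖q₂ lam‖ + 1)⁻¹ • tens (q₁ lam) (q₂ lam))‖
        ≤ 2 * r' γ + max (r' γ) (r' γ⁻¹) := by
  intro γ lam
  have htens : ∀ x y, ‖tens x y‖ ≤ ‖x‖ * ‖y‖ := fun x y =>
    (norm_apply_apply_eq_mul_of_inner hinner x y).le
  rw [map_smul, hρ, ← (π₁ γ).norm_map (q₁ lam), ← (π₂ γ).norm_map (q₂ lam)]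
  calc _ ≤ 3 * r' γ := norm_normalized_tensor_sub_le htens (h1 γ lam) (h2 γ lam)
    _ ≤ 2 * r' γ + max (r' γ) (r' γ⁻¹) := by linarith [le_max_left (r' γ) (r' γ⁻¹)]

/-- The normalized tensor product of two arrays is again boundedly equivariant, for the
tensor product representation.  The Hilbert space tensor product `H₁ ⊗ H₂` is encoded as a
space `H₃` together with a bilinear map `tens` satisfying the tensor inner product identity,
and the tensor representation is a representation `ρ` on `H₃` compatible with `tens`. -/
theorem tensor_of_arrays_boundedly_equivariant
    {Γ : Type*} [Group Γ]
    {H₁ : Type*} [NormedAddCommGroup H₁] [InnerProductSpace ℝ H₁] [CompleteSpace H₁]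
    {H₂ : Type*} [NormedAddCommGroup H₂] [InnerProductSpace ℝ H₂] [CompleteSpace H₂]
    {H₃ : Type*} [NormedAddCommGroup H₃] [InnerProductSpace ℝ H₃] [CompleteSpace H₃]
    (π₁ : Γ →* (H₁ ≃ₗᵢ[ℝ] H₁)) (π₂ : Γ →* (H₂ ≃ₗᵢ[ℝ] H₂)) (ρ : Γ →* (H₃ ≃ₗᵢ[ℝ] H₃))
    (tens : H₁ →ₗ[ℝ] H₂ →ₗ[ℝ] H₃)
    (hinner : ∀ (a c : H₁) (b d : H₂), (inner ℝ (tens a b) (tens c d) : ℝ) = (inner ℝ a c : ℝ) * (inner ℝ b d : ℝ))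
    (hρ : ∀ (γ : Γ) (x : H₁) (y : H₂), ρ γ (tens x y) = tens (π₁ γ x) (π₂ γ y))
    (q₁ : Γ → H₁) (q₂ : Γ → H₂) (r' : Γ → ℝ)
    (h1 : ∀ γ lam : Γ, ‖q₁ (γ * lam) - π₁ γ (q₁ lam)‖ ≤ r' γ)
    (h2 : ∀ γ lam : Γ, ‖q₂ (γ * lam) - π₂ γ (q₂ lam)‖ ≤ r' γ) :
    ∀ γ lam : Γ,
      ‖(max ‖q₁ (γ * lam)‖ ‖q₂ (γ * lam)‖ + 1)⁻¹ • tens (q₁ (γ * lam)) (q₂ (γ * lam))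
          - ρ γ ((max ‖q₁ lam‖ ‖q₂ lam‖ + 1)⁻¹ • tens (q₁ lam) (q₂ lam))‖
        ≤ 2 * r' γ + max (r' γ) (r' γ⁻¹) :=
  tensor_of_arrays_boundedly_equivariant_general π₁ π₂ ρ tens hinner hρ q₁ q₂ r' h1 h2
end

section
/- Spectral gap bounds symmetric arrays on commuting subgroups: let π : G → O(H) be an orthogonal representation of a group G, S ⊆ G a finite symmetric subset, and K > 0 a constant such that ‖ξ‖ ≤ K Σ_{s ∈ S} ‖π_s(ξ) − ξ‖ for all ξ ∈ H. Let q : G → H be a symmetric map (π_γ(q(γ⁻¹)) = q(γ) for all γ) satisfying ‖π_s(q(δ)) − q(sδ)‖ ≤ K for all s ∈ S, δ ∈ G. Then for every g ∈ G that commutes with every element of S, one has ‖q(g)‖ ≤ 2 K² |S|. -/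
/-! A symmetric array turns its left equivariance defect into a right one:
`‖q (g * s) - q g‖` is the defect `‖π s (q δ) - q (s * δ)‖` at `δ = s⁻¹ * g⁻¹`.
When `s` commutes with `g`, the triangle inequality through `q (s * g) = q (g * s)` then gives
`‖π s (q g) - q g‖ ≤ 2 K`, and the spectral gap inequality at `ξ = q g` finishes. -/

section SymmetricArray

variable {R G E : Type*} [Semiring R] [Group G] [SeminormedAddCommGroup E] [Module R E]
  (π : G →* (E ≃ₗᵢ[R] E)) {q : G → E}

theorem norm_mul_right_sub_eq_of_symmetric (hsymm : ∀ γ, π γ (q γ⁻¹) = q γ) (g s : G) :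
    ‖q (g * s) - q g‖ = ‖π s (q (s⁻¹ * g⁻¹)) - q (s * (s⁻¹ * g⁻¹))‖ := by
  have hmul : ∀ (a b : G) (x : E), π a (π b x) = π (a * b) x := by
    simp [map_mul, LinearIsometryEquiv.coe_mul]
  have hg : π g⁻¹ (q g) = q g⁻¹ := by
    rw [← hsymm g, hmul, inv_mul_cancel, map_one, LinearIsometryEquiv.coe_one, id]
  have hgs : π g⁻¹ (q (g * s)) = π s (q (s⁻¹ * g⁻¹)) := by
    rw [← hsymm (g * s), hmul, inv_mul_cancel_left, mul_inv_rev]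
  rw [← (π g⁻¹).norm_map, map_sub, hg, hgs, mul_inv_cancel_left]

theorem norm_map_sub_le_of_symmetric_of_commute {K : ℝ} (hsymm : ∀ γ, π γ (q γ⁻¹) = q γ)
    {s : G} (hdefect : ∀ δ, ‖π s (q δ) - q (s * δ)‖ ≤ K) {g : G} (hcomm : Commute s g) :
    ‖π s (q g) - q g‖ ≤ 2 * K :=
  calc ‖π s (q g) - q g‖ ≤ ‖π s (q g) - q (s * g)‖ + ‖q (g * s) - q g‖ := by
        rw [hcomm.eq]; exact norm_sub_le_norm_sub_add_norm_sub _ _ _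
    _ ≤ K + K := by
        rw [norm_mul_right_sub_eq_of_symmetric π hsymm]
        exact add_le_add (hdefect g) (hdefect _)
    _ = 2 * K := by ring

end SymmetricArray

theorem norm_le_of_spectral_gap {G E : Type*} [SeminormedAddCommGroup E] (ρ : G → E → E)
    (S : Finset G) {K C : ℝ} (hK : 0 ≤ K) {ξ : E} (hgap : ‖ξ‖ ≤ K * ∑ s ∈ S, ‖ρ s ξ - ξ‖)
    (hmove : ∀ s ∈ S, ‖ρ s ξ - ξ‖ ≤ C) :
    ‖ξ‖ ≤ K * C * S.card :=
  calc ‖ξ‖ ≤ K * ∑ s ∈ S, ‖ρ s ξ - ξ‖ := hgap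
    _ ≤ K * ∑ _s ∈ S, C := by gcongr with s hs; exact hmove s hs
    _ = K * C * S.card := by rw [Finset.sum_const, nsmul_eq_mul]; ring

theorem spectral_gap_bounds_symmetric_array_general
    {G : Type*} [Group G] {H : Type*} [NormedAddCommGroup H] [InnerProductSpace ℝ H]
    (π : G →* (H ≃ₗᵢ[ℝ] H)) (S : Finset G)
    (K : ℝ) (hK : 0 < K)
    (hgap : ∀ ξ : H, ‖ξ‖ ≤ K * ∑ s ∈ S, ‖π s ξ - ξ‖)
    (q : G → H) (hsymm : ∀ γ : G, π γ (q γ⁻¹) = q γ)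
    (hequiv : ∀ s ∈ S, ∀ δ : G, ‖π s (q δ) - q (s * δ)‖ ≤ K)
    (g : G) (hg : ∀ s ∈ S, s * g = g * s) :
    ‖q g‖ ≤ 2 * K ^ 2 * S.card := by
  have hmove : ∀ s ∈ S, ‖π s (q g) - q g‖ ≤ 2 * K := fun s hs =>
    norm_map_sub_le_of_symmetric_of_commute π hsymm (hequiv s hs) (hg s hs)
  calc ‖q g‖ ≤ K * (2 * K) * S.card :=
        norm_le_of_spectral_gap (fun s => π s) S hK.le (hgap (q g)) hmove
    _ = 2 * K ^ 2 * S.card := by ring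

/-- Spectral gap bounds symmetric arrays on elements commuting with the gap set. -/
theorem spectral_gap_bounds_symmetric_array
    {G : Type*} [Group G] {H : Type*} [NormedAddCommGroup H] [InnerProductSpace ℝ H]
    [CompleteSpace H]
    (π : G →* (H ≃ₗᵢ[ℝ] H)) (S : Finset G) (hSsym : ∀ s ∈ S, s⁻¹ ∈ S)
    (K : ℝ) (hK : 0 < K)
    (hgap : ∀ ξ : H, ‖ξ‖ ≤ K * ∑ s ∈ S, ‖π s ξ - ξ‖)
    (q : G → H) (hsymm : ∀ γ : G, π γ (q γ⁻¹) = q γ)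
    (hequiv : ∀ s ∈ S, ∀ δ : G, ‖π s (q δ) - q (s * δ)‖ ≤ K)
    (g : G) (hg : ∀ s ∈ S, s * g = g * s) :
    ‖q g‖ ≤ 2 * K ^ 2 * S.card :=
  spectral_gap_bounds_symmetric_array_general π S K hK hgap q hsymm hequiv g hg
end

section
/- If an infinite group Γ admits a map q : Γ → H into a real Hilbert space such that γ ↦ ‖q(γ)‖ is proper (sublevel sets are finite) and there exists a constant K with ‖π_γ(q(γ⁻¹)) − q(γ)‖ ≤ K for all γ (approximate symmetry under an orthogonal representation π), then for each fixed γ ∈ Γ there is a constant K(γ) such that ‖q(γ⁻¹ δ γ) − π_{γ⁻¹}(q(δ))‖ ≤ K(γ) for all δ ∈ Γ, provided q is boundedly equivariant (for each finite F ⊆ Γ there is K_F with ‖π_g(q(δ)) − q(gδ)‖ ≤ K_F for g ∈ F, δ ∈ Γ). -/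
/-!
Approximate symmetry `q γ ≈ π γ (q γ⁻¹)` converts bounded equivariance on the left into bounded
equivariance on the right: `q (δ γ) ≈ π (δ γ) (q (γ⁻¹ δ⁻¹)) ≈ π δ (q δ⁻¹) ≈ q δ`.
Combining this with left equivariance under `γ⁻¹` gives
`q (γ⁻¹ δ γ) ≈ π γ⁻¹ (q (δ γ)) ≈ π γ⁻¹ (q δ)`.
-/

section

variable {Γ R E : Type*} [Group Γ] [Semiring R] [SeminormedAddCommGroup E] [Module R E]
  (π : Γ →* (E ≃ₗᵢ[R] E)) {q : Γ → E} {K L : ℝ} {γ : Γ}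

theorem map_mul_map_inv_apply (γ δ : Γ) (x : E) : π (δ * γ) (π γ⁻¹ x) = π δ x := by
  rw [← Function.comp_apply (f := π (δ * γ)), ← LinearIsometryEquiv.coe_mul, ← map_mul,
    mul_inv_cancel_right]

theorem dist_mul_right_le_of_symm (hsym : ∀ γ, dist (π γ (q γ⁻¹)) (q γ) ≤ K)
    (hγ : ∀ δ, dist (π γ⁻¹ (q δ)) (q (γ⁻¹ * δ)) ≤ L) (δ : Γ) :
    dist (q (δ * γ)) (q δ) ≤ 2 * K + L := by
  have hmid : dist (π (δ * γ) (q (δ * γ)⁻¹)) (π δ (q δ⁻¹)) ≤ L := by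
    rw [← map_mul_map_inv_apply π γ δ, LinearIsometryEquiv.dist_map, dist_comm, mul_inv_rev]
    exact hγ δ⁻¹
  calc dist (q (δ * γ)) (q δ)
      ≤ dist (q (δ * γ)) (π (δ * γ) (q (δ * γ)⁻¹)) + dist (π (δ * γ) (q (δ * γ)⁻¹)) (π δ (q δ⁻¹))
          + dist (π δ (q δ⁻¹)) (q δ) := dist_triangle4 _ _ _ _
    _ ≤ K + L + K := by
      gcongr
      · exact dist_comm (q (δ * γ)) _ ▸ hsym (δ * γ)
      · exact hsym δ
    _ = 2 * K + L := by ring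

theorem dist_conj_le_of_symm (hsym : ∀ γ, dist (π γ (q γ⁻¹)) (q γ) ≤ K)
    (hγ : ∀ δ, dist (π γ⁻¹ (q δ)) (q (γ⁻¹ * δ)) ≤ L) (δ : Γ) :
    dist (q (γ⁻¹ * δ * γ)) (π γ⁻¹ (q δ)) ≤ 2 * K + 2 * L :=
  calc dist (q (γ⁻¹ * δ * γ)) (π γ⁻¹ (q δ))
      ≤ dist (q (γ⁻¹ * (δ * γ))) (π γ⁻¹ (q (δ * γ))) + dist (π γ⁻¹ (q (δ * γ))) (π γ⁻¹ (q δ)) := by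
        rw [mul_assoc]; exact dist_triangle _ _ _
    _ ≤ L + (2 * K + L) := by
      gcongr
      · exact dist_comm (π γ⁻¹ (q (δ * γ))) _ ▸ hγ (δ * γ)
      · exact (LinearIsometryEquiv.dist_map _ _ _).trans_le
          (dist_mul_right_le_of_symm π hsym hγ δ)
    _ = 2 * K + 2 * L := by ring

end

theorem conjugation_equivariance_estimate_general
    {Γ : Type*} [Group Γ]
    {H : Type*} [NormedAddCommGroup H] [InnerProductSpace ℝ H]
    (π : Γ →* (H ≃ₗᵢ[ℝ] H)) (q : Γ → H)
    (K : ℝ) (hsym : ∀ γ : Γ, ‖π γ (q γ⁻¹) - q γ‖ ≤ K)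
    (hbe : ∀ F : Finset Γ, ∃ KF : ℝ, ∀ g ∈ F, ∀ δ : Γ, ‖π g (q δ) - q (g * δ)‖ ≤ KF) :
    ∀ γ : Γ, ∃ Kγ : ℝ, ∀ δ : Γ,
      ‖q (γ⁻¹ * δ * γ) - π γ⁻¹ (q δ)‖ ≤ Kγ := by
  intro γ
  obtain ⟨L, hL⟩ := hbe {γ⁻¹}
  simp only [← dist_eq_norm] at hsym hL ⊢
  exact ⟨2 * K + 2 * L,
    dist_conj_le_of_symm π hsym (hL γ⁻¹ (Finset.mem_singleton_self _))⟩

/-- Conjugation-equivariance estimate for a proper, approximately symmetric, boundedly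
equivariant map into a Hilbert space. -/
theorem conjugation_equivariance_estimate
    {Γ : Type*} [Group Γ] [Countable Γ] [Infinite Γ]
    {H : Type*} [NormedAddCommGroup H] [InnerProductSpace ℝ H] [CompleteSpace H]
    (π : Γ →* (H ≃ₗᵢ[ℝ] H)) (q : Γ → H)
    (hproper : ∀ C > (0 : ℝ), {γ : Γ | ‖q γ‖ ≤ C}.Finite)
    (K : ℝ) (hsym : ∀ γ : Γ, ‖π γ (q γ⁻¹) - q γ‖ ≤ K)
    (hbe : ∀ F : Finset Γ, ∃ KF : ℝ, ∀ g ∈ F, ∀ δ : Γ, ‖π g (q δ) - q (g * δ)‖ ≤ KF) :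
    ∀ γ : Γ, ∃ Kγ : ℝ, ∀ δ : Γ,
      ‖q (γ⁻¹ * δ * γ) - π γ⁻¹ (q δ)‖ ≤ Kγ :=
  conjugation_equivariance_estimate_general π q K hsym hbe
end

section
/- Positive semidefiniteness of Gaussian kernels on Hilbert space (finite Schoenberg): for any real Hilbert space H, any finite list of vectors v₁, …, vₙ ∈ H, and any t ∈ ℝ, the n × n real matrix A with entries A_{ij} = exp(−t² ‖vᵢ − vⱼ‖²) is positive semidefinite: Σ_{i,j} cᵢ cⱼ exp(−t² ‖vᵢ − vⱼ‖²) ≥ 0 for all real c₁, …, cₙ. -/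
/-!
Write `‖vᵢ - vⱼ‖² = ‖vᵢ‖² - 2⟪vᵢ, vⱼ⟫ + ‖vⱼ‖²`. Then the Gaussian matrix is the Hadamard product of
the rank-one matrix `dᵢ dⱼ`, with `dᵢ = exp (-t² ‖vᵢ‖²)`, and the entrywise exponential of the
Gram matrix scaled by `2t²`. The exponential series has nonnegative coefficients and Hadamard
powers of a positive semidefinite matrix are positive semidefinite (Schur product theorem), so
the entrywise exponential of a positive semidefinite matrix is again positive semidefinite.
-/

open Matrix

namespace Matrix

variable {ι : Type*} [Fintype ι]

theorem PosSemidef.sum_mul_mul_nonneg {M : Matrix ι ι ℝ} (hM : M.PosSemidef)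
    (c : ι → ℝ) : 0 ≤ ∑ i, ∑ j, c i * c j * M i j := by
  have := hM.dotProduct_mulVec_nonneg c
  simp only [star_trivial, dotProduct, mulVec, Finset.mul_sum] at this
  simpa only [mul_comm, mul_left_comm] using this

open scoped ComplexOrder in
theorem PosSemidef.map_pow {𝕜 : Type*} [RCLike 𝕜] {A : Matrix ι ι 𝕜} (hA : A.PosSemidef)
    (k : ℕ) : (A.map (· ^ k)).PosSemidef := by
  induction k with
  | zero =>
    convert posSemidef_vecMulVec_self_star (1 : ι → 𝕜) using 1
    ext; simp
  | succ k ih =>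
    convert ih.hadamard hA using 1
    ext; simp [pow_succ]

theorem PosSemidef.map_exp {A : Matrix ι ι ℝ} (hA : A.PosSemidef) :
    (A.map Real.exp).PosSemidef := by
  refine .of_dotProduct_mulVec_nonneg (hA.isHermitian.map _ fun _ => rfl) fun c => ?_
  have hexp (x : ℝ) : HasSum (fun k : ℕ => x ^ k / k.factorial) (Real.exp x) :=
    Real.exp_eq_exp_ℝ ▸ NormedSpace.expSeries_div_hasSum_exp x
  have hsum : HasSum (fun k : ℕ => (k.factorial : ℝ)⁻¹ * (star c ⬝ᵥ (A.map (· ^ k) *ᵥ c)))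
      (star c ⬝ᵥ (A.map Real.exp *ᵥ c)) := by
    simp only [dotProduct, mulVec, Finset.mul_sum]
    refine hasSum_sum fun i _ => hasSum_sum fun j _ => ?_
    simpa [div_eq_inv_mul, mul_comm, mul_left_comm, mul_assoc] using
      (hexp (A i j)).mul_left (c i * c j)
  exact hsum.nonneg fun k => mul_nonneg (by positivity) ((hA.map_pow k).dotProduct_mulVec_nonneg c)

end Matrix

theorem posSemidef_gaussian_kernel {ι E : Type*} [Fintype ι] [NormedAddCommGroup E]
    [InnerProductSpace ℝ E] (v : ι → E) (t : ℝ) :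
    (of fun i j => Real.exp (-(t ^ 2) * ‖v i - v j‖ ^ 2)).PosSemidef := by
  set d : ι → ℝ := fun i => Real.exp (-(t ^ 2) * ‖v i‖ ^ 2)
  have hfactor : (of fun i j => Real.exp (-(t ^ 2) * ‖v i - v j‖ ^ 2)) =
      vecMulVec d (star d) ⊙ (((2 * t ^ 2) • gram ℝ v).map Real.exp) := by
    ext i j
    simp only [of_apply, hadamard_apply, vecMulVec_apply, map_apply, Matrix.smul_apply, gram_apply,
      star_trivial, d, smul_eq_mul, ← Real.exp_add, norm_sub_sq_real]
    ring_nf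
  rw [hfactor]
  exact (posSemidef_vecMulVec_self_star d).hadamard
    ((posSemidef_gram ℝ v).smul (by positivity)).map_exp

theorem gaussian_kernel_posdef_general
    {H : Type*} [NormedAddCommGroup H] [InnerProductSpace ℝ H]
    (n : ℕ) (v : Fin n → H) (t : ℝ) (c : Fin n → ℝ) :
    0 ≤ ∑ i, ∑ j, c i * c j * Real.exp (-(t ^ 2) * ‖v i - v j‖ ^ 2) :=
  (posSemidef_gaussian_kernel v t).sum_mul_mul_nonneg c

/-- Finite Schoenberg theorem: Gaussian kernels on a real Hilbert space are positive
semidefinite. -/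
theorem gaussian_kernel_posdef
    {H : Type*} [NormedAddCommGroup H] [InnerProductSpace ℝ H] [CompleteSpace H]
    (n : ℕ) (v : Fin n → H) (t : ℝ) (c : Fin n → ℝ) :
    0 ≤ ∑ i, ∑ j, c i * c j * Real.exp (-(t ^ 2) * ‖v i - v j‖ ^ 2) :=
  gaussian_kernel_posdef_general n v t c
end
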